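/- arXiv:2506.09267 — 3 statements merged into one kernel-verified Lean document; each statement's English description precedes it below -/
import Mathlib

section
/- Let K belong to the non-stationary class NS(α) on [0,1]² with coefficient functions Γ_0, Γ_2, Γ_α, and let 0 < α₁₁ < 2. For n ≥ 1 set h = 1/n, s_i = i·h, and Δ_h K(s_i, s_i) = K(s_i, s_i) − K(s_i, s_{i−1}) − K(s_{i−1}, s_i) + K(s_{i−1}, s_{i−1}), and define S_n = n^{α₁₁ − 1} · Σ_{i=1}^n Δ_h K(s_i, s_i). Then: (i) if α > α₁₁, S_n → 0 as n → ∞; (ii) if α = α₁₁, S_n → −2 ∫₀¹ Γ_α(s,s) ds as n → ∞. -/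
open MeasureTheory ProbabilityTheory Filter Asymptotics
open scoped Topology ENNReal NNReal

noncomputable section

/-- Membership in the non-stationary class `NS(α)` on `[0,1]²`:
`K(s,s') = Γ₀(s,s') + Γ₂(s,s')(s−s')² + Γ_α(s,s')|s−s'|^α + r(s,s')` with `Γ₀, Γ₂, Γ_α`
real-analytic on an open neighborhood of `[0,1]²`, `r(s,s') = o(|s−s'|^{α'})` uniformly as
`|s−s'| → 0` (`α' = min(α,2)`), and all mixed partial derivatives of `r` of order `k ≥ 1`
existing off the diagonal and `o(|s−s'|^{α'−k})` uniformly as `|s−s'| → 0`. -/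
def MemNSClass (K : ℝ → ℝ → ℝ) (α : ℝ) (Γ0 Γ2 Γα : ℝ → ℝ → ℝ) : Prop :=
  0 < α ∧
  (∃ U : Set (ℝ × ℝ), IsOpen U ∧ Set.Icc (0:ℝ) 1 ×ˢ Set.Icc (0:ℝ) 1 ⊆ U ∧
    AnalyticOnNhd ℝ (fun q : ℝ × ℝ => Γ0 q.1 q.2) U ∧
    AnalyticOnNhd ℝ (fun q : ℝ × ℝ => Γ2 q.1 q.2) U ∧
    AnalyticOnNhd ℝ (fun q : ℝ × ℝ => Γα q.1 q.2) U) ∧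
  ∃ r : ℝ → ℝ → ℝ,
    (∀ s ∈ Set.Icc (0:ℝ) 1, ∀ s' ∈ Set.Icc (0:ℝ) 1,
      K s s' = Γ0 s s' + Γ2 s s' * (s - s') ^ 2 + Γα s s' * |s - s'| ^ α + r s s') ∧
    (∀ ε : ℝ, 0 < ε → ∃ δ : ℝ, 0 < δ ∧ ∀ s ∈ Set.Icc (0:ℝ) 1, ∀ s' ∈ Set.Icc (0:ℝ) 1,
      |s - s'| < δ → |r s s'| ≤ ε * |s - s'| ^ min α 2) ∧
    ContDiffOn ℝ (⊤ : ℕ∞) (fun q : ℝ × ℝ => r q.1 q.2) {q : ℝ × ℝ | q.1 ≠ q.2} ∧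
    ∀ k : ℕ, 1 ≤ k → ∀ e : Fin k → ℝ × ℝ,
      (∀ i, e i = ((1:ℝ), (0:ℝ)) ∨ e i = ((0:ℝ), (1:ℝ))) →
      ∀ ε : ℝ, 0 < ε → ∃ δ : ℝ, 0 < δ ∧
        ∀ s ∈ Set.Icc (0:ℝ) 1, ∀ s' ∈ Set.Icc (0:ℝ) 1, s ≠ s' → |s - s'| < δ →
          |iteratedFDerivWithin ℝ k (fun q : ℝ × ℝ => r q.1 q.2)
              {q : ℝ × ℝ | q.1 ≠ q.2} (s, s') e|
            ≤ ε * |s - s'| ^ (min α 2 - k)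

lemma second_diff_bound {f : ℝ × ℝ → ℝ} {I : Set ℝ} (hI : Convex ℝ I)
    {C : ℝ}
    (hf : ∀ p ∈ I ×ˢ I, DifferentiableAt ℝ f p)
    (hLip : ∀ p ∈ I ×ˢ I, ∀ q ∈ I ×ˢ I, ‖fderiv ℝ f p - fderiv ℝ f q‖ ≤ C * ‖p - q‖)
    {a b : ℝ} (ha : a ∈ I) (hb : b ∈ I) :
    |f (a, a) - f (a, b) - f (b, a) + f (b, b)| ≤ C * |a - b| ^ 2 := by
  set φ : ℝ → ℝ := fun t => f (t, a) - f (t, b) with hφ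
  have hder : ∀ t ∈ I, HasDerivWithinAt φ
      ((fderiv ℝ f (t, a) - fderiv ℝ f (t, b)) (1, 0)) I t := by
    intro t ht
    have h1 : HasDerivAt (fun t => f (t, a)) (fderiv ℝ f (t, a) ((1:ℝ), (0:ℝ))) t := by
      have := ((hf (t, a) ⟨ht, ha⟩).hasFDerivAt).comp_hasDerivAt t
        ((hasDerivAt_id t).prodMk (hasDerivAt_const t a))
      simp at this
      exact this
    have h2 : HasDerivAt (fun t => f (t, b)) (fderiv ℝ f (t, b) ((1:ℝ), (0:ℝ))) t := by
      have := ((hf (t, b) ⟨ht, hb⟩).hasFDerivAt).comp_hasDerivAt t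
        ((hasDerivAt_id t).prodMk (hasDerivAt_const t b))
      simp at this
      exact this
    have := (h1.sub h2).hasDerivWithinAt (s := I)
    simp only [ContinuousLinearMap.sub_apply]
    exact this
  have hbound : ∀ t ∈ I, ‖(fderiv ℝ f (t, a) - fderiv ℝ f (t, b)) ((1:ℝ), (0:ℝ))‖
      ≤ C * |a - b| := by
    intro t ht
    calc ‖(fderiv ℝ f (t, a) - fderiv ℝ f (t, b)) ((1:ℝ), (0:ℝ))‖
        ≤ ‖fderiv ℝ f (t, a) - fderiv ℝ f (t, b)‖ * ‖((1:ℝ), (0:ℝ))‖ :=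
          ContinuousLinearMap.le_opNorm _ _
      _ = ‖fderiv ℝ f (t, a) - fderiv ℝ f (t, b)‖ := by
          norm_num [Prod.norm_def]
      _ ≤ C * ‖((t, a) : ℝ × ℝ) - (t, b)‖ := hLip _ ⟨ht, ha⟩ _ ⟨ht, hb⟩
      _ = C * |a - b| := by
          congr 1
          simp [Prod.norm_def, Prod.sub_def, Real.norm_eq_abs,
            max_eq_right (abs_nonneg (a - b))]
  have key := Convex.norm_image_sub_le_of_norm_hasDerivWithin_le hder hbound hI hb ha
  have : φ a - φ b = f (a, a) - f (a, b) - f (b, a) + f (b, b) := by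
    simp [hφ]; ring
  rw [← this]
  calc |φ a - φ b| ≤ C * |a - b| * ‖a - b‖ := key
    _ = C * |a - b| ^ 2 := by rw [Real.norm_eq_abs]; ring

lemma clamp_aux {d x : ℝ} (hd : 0 < d) (hx : x ∈ Set.Icc (-(d/2)) (1 + d/2)) :
    max 0 (min x 1) ∈ Set.Icc (0:ℝ) 1 ∧ |x - max 0 (min x 1)| ≤ d / 2 := by
  obtain ⟨h1, h2⟩ := hx
  constructor
  · constructor
    · exact le_max_left _ _
    · exact max_le (by linarith) (min_le_right _ _)
  · rcases le_total x 0 with hx0 | hx0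
    · have : min x 1 ≤ 0 := le_trans (min_le_left _ _) hx0
      rw [max_eq_left this]
      rw [abs_sub_comm, abs_of_nonneg (by linarith)]
      linarith
    · rcases le_total x 1 with hx1 | hx1
      · rw [min_eq_left hx1, max_eq_right hx0]
        simpa using le_of_lt (by linarith)
      · rw [min_eq_right hx1, max_eq_right zero_le_one]
        rw [abs_of_nonneg (by linarith)]
        linarith

lemma analytic_second_diff {f : ℝ × ℝ → ℝ} {U : Set (ℝ × ℝ)} (hU : IsOpen U)
    (hsub : Set.Icc (0:ℝ) 1 ×ˢ Set.Icc (0:ℝ) 1 ⊆ U)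
    (hf : AnalyticOnNhd ℝ f U) :
    ∃ C : ℝ, 0 ≤ C ∧ ∀ a ∈ Set.Icc (0:ℝ) 1, ∀ b ∈ Set.Icc (0:ℝ) 1,
      |f (a, a) - f (a, b) - f (b, a) + f (b, b)| ≤ C * |a - b| ^ 2 := by
  have hcomp : IsCompact (Set.Icc (0:ℝ) 1 ×ˢ Set.Icc (0:ℝ) 1) :=
    isCompact_Icc.prod isCompact_Icc
  obtain ⟨d, hd, hthick⟩ := hcomp.exists_thickening_subset_open hU hsub
  set I : Set ℝ := Set.Icc (-(d/2)) (1 + d/2) with hI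
  have hIsub : I ×ˢ I ⊆ U := by
    intro p hp
    apply hthick
    obtain ⟨hp1, hp2⟩ := hp
    obtain ⟨hm1, hle1⟩ := clamp_aux hd hp1
    obtain ⟨hm2, hle2⟩ := clamp_aux hd hp2
    rw [Metric.mem_thickening_iff]
    refine ⟨(max 0 (min p.1 1), max 0 (min p.2 1)), ⟨hm1, hm2⟩, ?_⟩
    rw [Prod.dist_eq]
    have e1 : dist p.1 (max 0 (min p.1 1)) ≤ d / 2 := by
      rw [Real.dist_eq]; exact hle1
    have e2 : dist p.2 (max 0 (min p.2 1)) ≤ d / 2 := by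
      rw [Real.dist_eq]; exact hle2
    have : max (dist p.1 (max 0 (min p.1 1))) (dist p.2 (max 0 (min p.2 1))) ≤ d / 2 :=
      max_le e1 e2
    linarith
  have h01I : Set.Icc (0:ℝ) 1 ⊆ I := by
    intro x hx
    exact ⟨by linarith [hx.1], by linarith [hx.2]⟩
  have hIconv : Convex ℝ I := convex_Icc _ _
  have hIcomp : IsCompact (I ×ˢ I) := isCompact_Icc.prod isCompact_Icc
  -- first and second derivatives analytic
  have hf1 : AnalyticOnNhd ℝ (fderiv ℝ f) U := hf.fderiv_of_isOpen hU
  have hf2 : AnalyticOnNhd ℝ (fderiv ℝ (fderiv ℝ f)) U := hf1.fderiv_of_isOpen hU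
  obtain ⟨C, hC⟩ := hIcomp.exists_bound_of_continuousOn (f := fderiv ℝ (fderiv ℝ f)) (by exact (hf2.continuousOn).mono hIsub)
  have hC0 : 0 ≤ C := le_trans (norm_nonneg _)
    (hC (0, 0) ⟨h01I ⟨le_refl 0, zero_le_one⟩, h01I ⟨le_refl 0, zero_le_one⟩⟩)
  refine ⟨C, hC0, ?_⟩
  intro a ha b hb
  refine second_diff_bound hIconv ?_ ?_ (h01I ha) (h01I hb)
  · intro p hp
    exact (hf p (hIsub hp)).differentiableAt
  · intro p hp q hq
    exact Convex.norm_image_sub_le_of_norm_fderiv_le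
      (fun x hx => (hf1 x (hIsub hx)).differentiableAt)
      (fun x hx => hC x hx) (hIconv.prod hIconv) hq hp

lemma riemann_sum_tendsto {g : ℝ → ℝ} (hg : ContinuousOn g (Set.Icc 0 1)) :
    Tendsto (fun n : ℕ => (1 / (n:ℝ)) * ∑ i ∈ Finset.Icc 1 n, g ((i:ℝ)/n)) atTop
      (𝓝 (∫ s in (0:ℝ)..1, g s)) := by
  have hunif : ∀ ε > (0:ℝ), ∃ δ > (0:ℝ), ∀ x ∈ Set.Icc (0:ℝ) 1, ∀ y ∈ Set.Icc (0:ℝ) 1,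
      dist x y < δ → dist (g x) (g y) < ε := by
    have := isCompact_Icc.uniformContinuousOn_of_continuous hg
    rwa [Metric.uniformContinuousOn_iff] at this
  rw [Metric.tendsto_atTop]
  intro ε hε
  obtain ⟨δ, hδ, hδ'⟩ := hunif (ε/2) (by linarith)
  obtain ⟨N, hN⟩ := exists_nat_gt (1/δ)
  refine ⟨max N 1, fun n hn => ?_⟩
  have hn1 : 1 ≤ n := le_trans (le_max_right _ _) hn
  have hnN : (N:ℝ) ≤ n := Nat.cast_le.mpr (le_trans (le_max_left _ _) hn)
  have hn0 : (0:ℝ) < n := by exact_mod_cast hn1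
  have hinv : 1 / (n:ℝ) < δ := by
    rw [div_lt_iff₀ hn0]
    have : 1/δ < (n:ℝ) := lt_of_lt_of_le hN hnN
    rw [div_lt_iff₀ hδ] at this
    linarith [mul_comm δ (n:ℝ)]
  -- membership facts
  have hmem : ∀ k : ℕ, k ≤ n → ((k:ℝ)/n) ∈ Set.Icc (0:ℝ) 1 := by
    intro k hk
    constructor
    · positivity
    · rw [div_le_one hn0]; exact_mod_cast hk
  -- integrability on subintervals
  have hint : ∀ k : ℕ, k < n → IntervalIntegrable g MeasureTheory.volume
      ((k:ℝ)/n) (((k:ℝ)+1)/n) := by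
    intro k hk
    apply ContinuousOn.intervalIntegrable
    apply hg.mono
    rw [Set.uIcc_of_le (by gcongr; linarith)]
    intro x hx
    have h1 := (hmem k hk.le).1
    have hk1 : ((k:ℝ)+1)/n ≤ 1 := by
      have : ((k+1:ℕ):ℝ)/n ≤ 1 := (hmem (k+1) hk).2
      push_cast at this; linarith
    exact ⟨le_trans h1 hx.1, le_trans hx.2 hk1⟩
  have hsplit : ∑ k ∈ Finset.range n, ∫ s in ((k:ℝ)/n)..(((k:ℝ)+1)/n), g s
      = ∫ s in (0:ℝ)..1, g s := by
    have hs := intervalIntegral.sum_integral_adjacent_intervals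
      (a := fun k : ℕ => (k:ℝ)/n) (n := n) (f := g) (μ := MeasureTheory.volume)
      (by intro k hk; exact_mod_cast hint k hk)
    push_cast at hs
    rw [div_self (ne_of_gt hn0)] at hs
    simpa using hs
  -- rewrite the sum over Icc 1 n as sum over range n
  have hsum : ∑ i ∈ Finset.Icc 1 n, g ((i:ℝ)/n)
      = ∑ k ∈ Finset.range n, g (((k:ℝ)+1)/n) := by
    rw [← Finset.Ico_add_one_right_eq_Icc, Finset.sum_Ico_eq_sum_range]
    simp only [Nat.add_sub_cancel, Nat.succ_sub_one]
    apply Finset.sum_congr rfl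
    intro k _
    congr 1
    push_cast; ring
  rw [Real.dist_eq, ← hsplit, hsum, Finset.mul_sum]
  have key : ∀ k ∈ Finset.range n,
      |(1/(n:ℝ)) * g (((k:ℝ)+1)/n) - ∫ s in ((k:ℝ)/n)..(((k:ℝ)+1)/n), g s|
        ≤ (ε/2) * (1/n) := by
    intro k hk
    rw [Finset.mem_range] at hk
    have hlen : ((k:ℝ)+1)/n - (k:ℝ)/n = 1/n := by field_simp; ring
    have hconst : (1/(n:ℝ)) * g (((k:ℝ)+1)/n)
        = ∫ _ in ((k:ℝ)/n)..(((k:ℝ)+1)/n), g (((k:ℝ)+1)/n) := by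
      rw [intervalIntegral.integral_const, smul_eq_mul, hlen]
    rw [hconst, ← intervalIntegral.integral_sub (intervalIntegrable_const) (hint k hk)]
    have hbd : ∀ s ∈ Set.uIoc ((k:ℝ)/n) (((k:ℝ)+1)/n),
        ‖g (((k:ℝ)+1)/n) - g s‖ ≤ ε/2 := by
      intro s hs
      have hle : (k:ℝ)/n ≤ ((k:ℝ)+1)/n := by
        gcongr
        linarith
      rw [Set.uIoc_of_le hle] at hs
      have hk1mem : (((k:ℝ)+1)/n) ∈ Set.Icc (0:ℝ) 1 := by
        have := hmem (k+1) hk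
        push_cast at this; exact this
      have hsmem : s ∈ Set.Icc (0:ℝ) 1 := by
        constructor
        · exact le_trans (hmem k hk.le).1 hs.1.le
        · exact le_trans hs.2 hk1mem.2
      have hdist : dist (((k:ℝ)+1)/n) s < δ := by
        rw [Real.dist_eq, abs_of_nonneg (by linarith [hs.2])]
        calc ((k:ℝ)+1)/n - s < ((k:ℝ)+1)/n - (k:ℝ)/n := by linarith [hs.1]
          _ = 1/n := hlen
          _ < δ := hinv
      exact le_of_lt (by simpa [Real.dist_eq] using hδ' _ hk1mem _ hsmem hdist)
    calc ‖∫ s in ((k:ℝ)/n)..(((k:ℝ)+1)/n), (g (((k:ℝ)+1)/n) - g s)‖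
        ≤ (ε/2) * |((k:ℝ)+1)/n - (k:ℝ)/n| :=
          intervalIntegral.norm_integral_le_of_norm_le_const hbd
      _ = (ε/2) * (1/n) := by rw [hlen, abs_of_pos (by positivity)]
  calc |∑ k ∈ Finset.range n, (1/(n:ℝ)) * g (((k:ℝ)+1)/n)
        - ∑ k ∈ Finset.range n, ∫ s in ((k:ℝ)/n)..(((k:ℝ)+1)/n), g s|
      = |∑ k ∈ Finset.range n, ((1/(n:ℝ)) * g (((k:ℝ)+1)/n)
          - ∫ s in ((k:ℝ)/n)..(((k:ℝ)+1)/n), g s)| := by rw [Finset.sum_sub_distrib]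
    _ ≤ ∑ k ∈ Finset.range n, |(1/(n:ℝ)) * g (((k:ℝ)+1)/n)
          - ∫ s in ((k:ℝ)/n)..(((k:ℝ)+1)/n), g s| := Finset.abs_sum_le_sum_abs _ _
    _ ≤ ∑ _k ∈ Finset.range n, (ε/2) * (1/n) := Finset.sum_le_sum key
    _ = (ε/2) := by
        rw [Finset.sum_const, Finset.card_range, nsmul_eq_mul]
        field_simp
    _ < ε := by linarith

lemma offdiag_sum_tendsto {G : ℝ → ℝ → ℝ}
    (hG : ContinuousOn (fun q : ℝ × ℝ => G q.1 q.2) (Set.Icc 0 1 ×ˢ Set.Icc 0 1)) :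
    Tendsto (fun n : ℕ => (1 / (n:ℝ)) * ∑ i ∈ Finset.Icc 1 n,
        (G ((i:ℝ)/n) (((i:ℝ)-1)/n) + G (((i:ℝ)-1)/n) ((i:ℝ)/n))) atTop
      (𝓝 (2 * ∫ s in (0:ℝ)..1, G s s)) := by
  have hgdiag : ContinuousOn (fun s : ℝ => G s s) (Set.Icc 0 1) := by
    have : ContinuousOn (fun s : ℝ => ((s, s) : ℝ × ℝ)) (Set.Icc 0 1) :=
      (continuous_id.prodMk continuous_id).continuousOn
    exact hG.comp this (fun s hs => ⟨hs, hs⟩)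
  -- the error term tends to zero
  have herr : Tendsto (fun n : ℕ => (1 / (n:ℝ)) * ∑ i ∈ Finset.Icc 1 n,
      ((G ((i:ℝ)/n) (((i:ℝ)-1)/n) + G (((i:ℝ)-1)/n) ((i:ℝ)/n)) - 2 * G ((i:ℝ)/n) ((i:ℝ)/n)))
      atTop (𝓝 0) := by
    have hunif : ∀ ε > (0:ℝ), ∃ δ > (0:ℝ),
        ∀ p ∈ Set.Icc (0:ℝ) 1 ×ˢ Set.Icc (0:ℝ) 1, ∀ q ∈ Set.Icc (0:ℝ) 1 ×ˢ Set.Icc (0:ℝ) 1,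
        dist p q < δ → dist ((fun q : ℝ × ℝ => G q.1 q.2) p) ((fun q : ℝ × ℝ => G q.1 q.2) q) < ε := by
      have := (isCompact_Icc.prod isCompact_Icc).uniformContinuousOn_of_continuous hG
      rwa [Metric.uniformContinuousOn_iff] at this
    rw [Metric.tendsto_atTop]
    intro ε hε
    obtain ⟨δ, hδ, hδ'⟩ := hunif (ε/4) (by linarith)
    obtain ⟨N, hN⟩ := exists_nat_gt (1/δ)
    refine ⟨max N 1, fun n hn => ?_⟩
    have hn1 : 1 ≤ n := le_trans (le_max_right _ _) hn
    have hnN : (N:ℝ) ≤ n := Nat.cast_le.mpr (le_trans (le_max_left _ _) hn)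
    have hn0 : (0:ℝ) < n := by exact_mod_cast hn1
    have hinv : 1 / (n:ℝ) < δ := by
      rw [div_lt_iff₀ hn0]
      have : 1/δ < (n:ℝ) := lt_of_lt_of_le hN hnN
      rw [div_lt_iff₀ hδ] at this
      linarith [mul_comm δ (n:ℝ)]
    rw [Real.dist_eq, sub_zero]
    have key : ∀ i ∈ Finset.Icc 1 n,
        |(G ((i:ℝ)/n) (((i:ℝ)-1)/n) + G (((i:ℝ)-1)/n) ((i:ℝ)/n)) - 2 * G ((i:ℝ)/n) ((i:ℝ)/n)|
          ≤ ε/2 := by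
      intro i hi
      rw [Finset.mem_Icc] at hi
      have hi1 : (1:ℝ) ≤ i := by exact_mod_cast hi.1
      have hin : (i:ℝ) ≤ n := by exact_mod_cast hi.2
      have ha : (i:ℝ)/n ∈ Set.Icc (0:ℝ) 1 := ⟨by positivity, by rw [div_le_one hn0]; exact hin⟩
      have hb : ((i:ℝ)-1)/n ∈ Set.Icc (0:ℝ) 1 :=
        ⟨by apply div_nonneg (by linarith) hn0.le, by rw [div_le_one hn0]; linarith⟩
      have hdist1 : dist (((i:ℝ)/n, ((i:ℝ)-1)/n) : ℝ × ℝ) (((i:ℝ)/n, (i:ℝ)/n) : ℝ × ℝ) < δ := by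
        rw [Prod.dist_eq]
        simp only [dist_self]
        rw [max_eq_right dist_nonneg, Real.dist_eq]
        have : ((i:ℝ)-1)/n - (i:ℝ)/n = -(1/n) := by field_simp; ring
        rw [this, abs_neg, abs_of_pos (by positivity)]
        exact hinv
      have hdist2 : dist ((((i:ℝ)-1)/n, (i:ℝ)/n) : ℝ × ℝ) (((i:ℝ)/n, (i:ℝ)/n) : ℝ × ℝ) < δ := by
        rw [Prod.dist_eq]
        simp only [dist_self]
        rw [max_eq_left dist_nonneg, Real.dist_eq]
        have : ((i:ℝ)-1)/n - (i:ℝ)/n = -(1/n) := by field_simp; ring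
        rw [this, abs_neg, abs_of_pos (by positivity)]
        exact hinv
      have e1 := hδ' _ ⟨ha, hb⟩ _ ⟨ha, ha⟩ hdist1
      have e2 := hδ' _ ⟨hb, ha⟩ _ ⟨ha, ha⟩ hdist2
      simp only [Real.dist_eq] at e1 e2
      have : (G ((i:ℝ)/n) (((i:ℝ)-1)/n) + G (((i:ℝ)-1)/n) ((i:ℝ)/n)) - 2 * G ((i:ℝ)/n) ((i:ℝ)/n)
          = (G ((i:ℝ)/n) (((i:ℝ)-1)/n) - G ((i:ℝ)/n) ((i:ℝ)/n))
            + (G (((i:ℝ)-1)/n) ((i:ℝ)/n) - G ((i:ℝ)/n) ((i:ℝ)/n)) := by ring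
      rw [this]
      calc |_ + _| ≤ _ + _ := abs_add_le _ _
        _ ≤ ε/4 + ε/4 := add_le_add e1.le e2.le
        _ = ε/2 := by ring
    calc |(1/(n:ℝ)) * ∑ i ∈ Finset.Icc 1 n,
          ((G ((i:ℝ)/n) (((i:ℝ)-1)/n) + G (((i:ℝ)-1)/n) ((i:ℝ)/n)) - 2 * G ((i:ℝ)/n) ((i:ℝ)/n))|
        ≤ (1/(n:ℝ)) * ∑ i ∈ Finset.Icc 1 n, (ε/2) := by
          rw [abs_mul, abs_of_pos (by positivity : (0:ℝ) < 1/(n:ℝ))]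
          apply mul_le_mul_of_nonneg_left _ (by positivity)
          exact le_trans (Finset.abs_sum_le_sum_abs _ _) (Finset.sum_le_sum key)
      _ = ε/2 := by
          rw [Finset.sum_const, Nat.card_Icc, nsmul_eq_mul]
          have : ((n + 1 - 1 : ℕ) : ℝ) = n := by simp
          rw [this]
          field_simp
      _ < ε := by linarith
  have hmain := herr.add ((riemann_sum_tendsto hgdiag).const_mul 2)
  rw [zero_add] at hmain
  apply hmain.congr
  intro n
  rw [Finset.sum_sub_distrib, ← Finset.mul_sum]
  ring

/-- Lemma S1 of the paper. For `K ∈ NS(α)` and `0 < α₁₁ < 2`, the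
normalized diagonal sum of second differences
`S_n = n^{α₁₁−1} Σ_{i=1}^n Δ_h K(s_i, s_i)` (with `s_i = i/n`) tends to `0` if `α > α₁₁`,
and to `−2 ∫₀¹ Γ_α(s,s) ds` if `α = α₁₁`. -/
theorem ns_diagonal_difference_limit
    (K : ℝ → ℝ → ℝ) (α : ℝ) (Γ0 Γ2 Γα : ℝ → ℝ → ℝ)
    (hK : MemNSClass K α Γ0 Γ2 Γα)
    (α11 : ℝ) (hα11pos : 0 < α11) (hα11lt : α11 < 2) :
    (α11 < α →
      Tendsto
        (fun n : ℕ => (n : ℝ) ^ (α11 - 1) *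
          ∑ i ∈ Finset.Icc 1 n,
            (K ((i : ℝ) / n) ((i : ℝ) / n) - K ((i : ℝ) / n) (((i : ℝ) - 1) / n)
              - K (((i : ℝ) - 1) / n) ((i : ℝ) / n)
              + K (((i : ℝ) - 1) / n) (((i : ℝ) - 1) / n)))
        atTop (𝓝 0)) ∧
    (α = α11 →
      Tendsto
        (fun n : ℕ => (n : ℝ) ^ (α11 - 1) *
          ∑ i ∈ Finset.Icc 1 n,
            (K ((i : ℝ) / n) ((i : ℝ) / n) - K ((i : ℝ) / n) (((i : ℝ) - 1) / n)
              - K (((i : ℝ) - 1) / n) ((i : ℝ) / n)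
              + K (((i : ℝ) - 1) / n) (((i : ℝ) - 1) / n)))
        atTop (𝓝 (-2 * ∫ s in (0:ℝ)..1, Γα s s))) := by
  obtain ⟨hα, ⟨U, hUopen, hUsub, hΓ0, hΓ2, hΓα⟩, r, hdecomp, hrbound, -⟩ := hK
  set F0 : ℝ × ℝ → ℝ := fun q => Γ0 q.1 q.2 + Γ2 q.1 q.2 * (q.1 - q.2) ^ 2 with hF0
  have hF0a : AnalyticOnNhd ℝ F0 U :=
    hΓ0.add (hΓ2.mul ((analyticOnNhd_fst.sub analyticOnNhd_snd).pow 2))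
  obtain ⟨C, hC0, hCbd⟩ := analytic_second_diff hUopen hUsub hF0a
  have hα' : 0 < min α 2 := lt_min hα two_pos
  have hrdiag : ∀ s ∈ Set.Icc (0:ℝ) 1, r s s = 0 := by
    intro s hs
    obtain ⟨δ, hδ, h⟩ := hrbound 1 one_pos
    have h2 := h s hs s hs (by simpa using hδ)
    have h0 : |r s s| ≤ 0 := by
      simpa [Real.zero_rpow (ne_of_gt hα')] using h2
    exact abs_eq_zero.mp (le_antisymm h0 (abs_nonneg _))
  have hK4 : ∀ s ∈ Set.Icc (0:ℝ) 1, ∀ t ∈ Set.Icc (0:ℝ) 1,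
      K s t = F0 (s, t) + Γα s t * |s - t| ^ α + r s t := by
    intro s hs t ht
    rw [hdecomp s hs t ht]
    try simp [hF0]
  -- membership helper
  have hmem : ∀ n : ℕ, 1 ≤ n → ∀ i : ℕ, 1 ≤ i → i ≤ n →
      ((i:ℝ)/n) ∈ Set.Icc (0:ℝ) 1 ∧ (((i:ℝ)-1)/n) ∈ Set.Icc (0:ℝ) 1 ∧
      |(i:ℝ)/n - ((i:ℝ)-1)/n| = 1/(n:ℝ) ∧ |((i:ℝ)-1)/n - (i:ℝ)/n| = 1/(n:ℝ) := by
    intro n hn i hi1 hin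
    have hn0 : (0:ℝ) < n := by exact_mod_cast hn
    have hi1' : (1:ℝ) ≤ i := by exact_mod_cast hi1
    have hin' : (i:ℝ) ≤ n := by exact_mod_cast hin
    have hab : (i:ℝ)/n - ((i:ℝ)-1)/n = 1/(n:ℝ) := by field_simp; ring
    refine ⟨⟨by positivity, by rw [div_le_one hn0]; exact hin'⟩,
      ⟨div_nonneg (by linarith) hn0.le, by rw [div_le_one hn0]; linarith⟩, ?_, ?_⟩
    · rw [hab]; exact abs_of_pos (by positivity)
    · rw [abs_sub_comm, hab]; exact abs_of_pos (by positivity)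
  -- rpow helpers
  have hrpow0 : ∀ e : ℝ, e < 0 → Tendsto (fun n : ℕ => (n:ℝ) ^ e) atTop (𝓝 0) := by
    intro e he
    have h := tendsto_rpow_neg_atTop (y := -e) (by linarith)
    simp only [neg_neg] at h
    exact h.comp tendsto_natCast_atTop_atTop
  have hpowgen : ∀ (c e : ℝ) (n : ℕ), 1 ≤ n →
      (n:ℝ) ^ (α11 - 1) * ((n:ℝ) * (c * ((1:ℝ)/n) ^ e)) = c * (n:ℝ) ^ (α11 - e) := by
    intro c e n hn
    have hn0 : (0:ℝ) < n := by exact_mod_cast hn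
    rw [one_div, Real.inv_rpow hn0.le, ← Real.rpow_neg hn0.le]
    rw [show (n:ℝ) * (c * (n:ℝ) ^ (-e)) = c * ((n:ℝ) ^ (1:ℝ) * (n:ℝ) ^ (-e)) by
      rw [Real.rpow_one]; ring]
    rw [← Real.rpow_add hn0, mul_left_comm, ← Real.rpow_add hn0]
    congr 2
    try ring
  have hpowB : ∀ n : ℕ, 1 ≤ n →
      (n:ℝ) ^ (α11 - 1) * ((1:ℝ)/n) ^ α = (n:ℝ) ^ (α11 - α) * (1/(n:ℝ)) := by
    intro n hn
    have hn0 : (0:ℝ) < n := by exact_mod_cast hn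
    rw [one_div, Real.inv_rpow hn0.le, ← Real.rpow_neg hn0.le, ← Real.rpow_add hn0,
      ← Real.rpow_neg_one (n:ℝ), ← Real.rpow_add hn0]
    congr 1
    try ring
  -- decomposition of the sum
  have hterm : ∀ n : ℕ, 1 ≤ n → ∀ i ∈ Finset.Icc 1 n,
      (K ((i : ℝ) / n) ((i : ℝ) / n) - K ((i : ℝ) / n) (((i : ℝ) - 1) / n)
        - K (((i : ℝ) - 1) / n) ((i : ℝ) / n)
        + K (((i : ℝ) - 1) / n) (((i : ℝ) - 1) / n)) =
      (F0 ((i:ℝ)/n, (i:ℝ)/n) - F0 ((i:ℝ)/n, ((i:ℝ)-1)/n) - F0 (((i:ℝ)-1)/n, (i:ℝ)/n)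
        + F0 (((i:ℝ)-1)/n, ((i:ℝ)-1)/n))
      - (Γα ((i:ℝ)/n) (((i:ℝ)-1)/n) + Γα (((i:ℝ)-1)/n) ((i:ℝ)/n)) * ((1:ℝ)/n) ^ α
      - (r ((i:ℝ)/n) (((i:ℝ)-1)/n) + r (((i:ℝ)-1)/n) ((i:ℝ)/n)) := by
    intro n hn i hi
    rw [Finset.mem_Icc] at hi
    obtain ⟨ha, hb, habs, habs'⟩ := hmem n hn i hi.1 hi.2
    rw [hK4 _ ha _ ha, hK4 _ ha _ hb, hK4 _ hb _ ha, hK4 _ hb _ hb,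
      hrdiag _ ha, hrdiag _ hb, habs, habs']
    simp only [sub_self, abs_zero, Real.zero_rpow (ne_of_gt hα)]
    ring
  have hsum_eq : ∀ n : ℕ, 1 ≤ n →
      ((n : ℝ) ^ (α11 - 1) *
        ∑ i ∈ Finset.Icc 1 n,
          (K ((i : ℝ) / n) ((i : ℝ) / n) - K ((i : ℝ) / n) (((i : ℝ) - 1) / n)
            - K (((i : ℝ) - 1) / n) ((i : ℝ) / n)
            + K (((i : ℝ) - 1) / n) (((i : ℝ) - 1) / n))) =
      ((n : ℝ) ^ (α11 - 1) *
        ∑ i ∈ Finset.Icc 1 n,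
          (F0 ((i:ℝ)/n, (i:ℝ)/n) - F0 ((i:ℝ)/n, ((i:ℝ)-1)/n) - F0 (((i:ℝ)-1)/n, (i:ℝ)/n)
            + F0 (((i:ℝ)-1)/n, ((i:ℝ)-1)/n)))
      - (n : ℝ) ^ (α11 - α) * ((1/(n:ℝ)) *
          ∑ i ∈ Finset.Icc 1 n,
            (Γα ((i:ℝ)/n) (((i:ℝ)-1)/n) + Γα (((i:ℝ)-1)/n) ((i:ℝ)/n)))
      - (n : ℝ) ^ (α11 - 1) *
          ∑ i ∈ Finset.Icc 1 n,
            (r ((i:ℝ)/n) (((i:ℝ)-1)/n) + r (((i:ℝ)-1)/n) ((i:ℝ)/n)) := by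
    intro n hn
    rw [Finset.sum_congr rfl (hterm n hn)]
    rw [Finset.sum_sub_distrib, Finset.sum_sub_distrib, ← Finset.sum_mul]
    rw [mul_sub, mul_sub]
    congr 1
    congr 1
    rw [show (n:ℝ) ^ (α11 - 1) *
        ((∑ i ∈ Finset.Icc 1 n,
          (Γα ((i:ℝ)/n) (((i:ℝ)-1)/n) + Γα (((i:ℝ)-1)/n) ((i:ℝ)/n))) * ((1:ℝ)/n) ^ α)
      = ((n:ℝ) ^ (α11 - 1) * ((1:ℝ)/n) ^ α) *
        (∑ i ∈ Finset.Icc 1 n,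
          (Γα ((i:ℝ)/n) (((i:ℝ)-1)/n) + Γα (((i:ℝ)-1)/n) ((i:ℝ)/n))) from by ring,
      hpowB n hn, mul_assoc]
  -- limit of the analytic part
  have hA : Tendsto (fun n : ℕ => (n : ℝ) ^ (α11 - 1) *
      ∑ i ∈ Finset.Icc 1 n,
        (F0 ((i:ℝ)/n, (i:ℝ)/n) - F0 ((i:ℝ)/n, ((i:ℝ)-1)/n) - F0 (((i:ℝ)-1)/n, (i:ℝ)/n)
          + F0 (((i:ℝ)-1)/n, ((i:ℝ)-1)/n))) atTop (𝓝 0) := by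
    apply squeeze_zero_norm' (a := fun n : ℕ => C * (n:ℝ) ^ (α11 - 2))
    · filter_upwards [eventually_ge_atTop 1] with n hn
      have hn0 : (0:ℝ) < n := by exact_mod_cast hn
      have hsb : |∑ i ∈ Finset.Icc 1 n,
          (F0 ((i:ℝ)/n, (i:ℝ)/n) - F0 ((i:ℝ)/n, ((i:ℝ)-1)/n) - F0 (((i:ℝ)-1)/n, (i:ℝ)/n)
            + F0 (((i:ℝ)-1)/n, ((i:ℝ)-1)/n))|
          ≤ (n:ℝ) * (C * (1/(n:ℝ)) ^ (2:ℕ)) := by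
        calc |∑ i ∈ Finset.Icc 1 n, _| ≤ ∑ i ∈ Finset.Icc 1 n,
            |F0 ((i:ℝ)/n, (i:ℝ)/n) - F0 ((i:ℝ)/n, ((i:ℝ)-1)/n) - F0 (((i:ℝ)-1)/n, (i:ℝ)/n)
              + F0 (((i:ℝ)-1)/n, ((i:ℝ)-1)/n)| := Finset.abs_sum_le_sum_abs _ _
          _ ≤ ∑ i ∈ Finset.Icc 1 n, (C * (1/(n:ℝ)) ^ (2:ℕ)) := by
              apply Finset.sum_le_sum
              intro i hi
              rw [Finset.mem_Icc] at hi
              obtain ⟨ha, hb, habs, -⟩ := hmem n hn i hi.1 hi.2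
              calc |F0 ((i:ℝ)/n, (i:ℝ)/n) - F0 ((i:ℝ)/n, ((i:ℝ)-1)/n)
                    - F0 (((i:ℝ)-1)/n, (i:ℝ)/n) + F0 (((i:ℝ)-1)/n, ((i:ℝ)-1)/n)|
                  ≤ C * |(i:ℝ)/n - ((i:ℝ)-1)/n| ^ (2:ℕ) := hCbd _ ha _ hb
                _ = C * (1/(n:ℝ)) ^ (2:ℕ) := by rw [habs]
          _ = (n:ℝ) * (C * (1/(n:ℝ)) ^ (2:ℕ)) := by
              rw [Finset.sum_const, Nat.card_Icc, nsmul_eq_mul]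
              congr 1
              try simp
      rw [Real.norm_eq_abs, abs_mul, abs_of_nonneg (Real.rpow_nonneg hn0.le _)]
      calc (n:ℝ) ^ (α11 - 1) * |∑ i ∈ Finset.Icc 1 n, _|
          ≤ (n:ℝ) ^ (α11 - 1) * ((n:ℝ) * (C * (1/(n:ℝ)) ^ (2:ℕ))) :=
            mul_le_mul_of_nonneg_left hsb (Real.rpow_nonneg hn0.le _)
        _ = C * (n:ℝ) ^ (α11 - 2) := by
            have h2 := hpowgen C ((2:ℕ):ℝ) n hn
            rw [Real.rpow_natCast] at h2
            norm_num at h2 ⊢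
            exact h2
    · have := (hrpow0 (α11 - 2) (by linarith)).const_mul C
      simpa using this
  -- limit of the remainder part
  have hResid : α11 ≤ min α 2 → Tendsto (fun n : ℕ => (n : ℝ) ^ (α11 - 1) *
      ∑ i ∈ Finset.Icc 1 n,
        (r ((i:ℝ)/n) (((i:ℝ)-1)/n) + r (((i:ℝ)-1)/n) ((i:ℝ)/n))) atTop (𝓝 0) := by
    intro hle
    rw [Metric.tendsto_atTop]
    intro ε hε
    obtain ⟨δ, hδ, hrb⟩ := hrbound (ε/4) (by linarith)
    obtain ⟨N, hN⟩ := exists_nat_gt (1/δ)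
    refine ⟨max N 1, fun n hn => ?_⟩
    have hn1 : 1 ≤ n := le_trans (le_max_right _ _) hn
    have hnN : (N:ℝ) ≤ n := Nat.cast_le.mpr (le_trans (le_max_left _ _) hn)
    have hn0 : (0:ℝ) < n := by exact_mod_cast hn1
    have hinv : 1 / (n:ℝ) < δ := by
      rw [div_lt_iff₀ hn0]
      have h5 : 1/δ < (n:ℝ) := lt_of_lt_of_le hN hnN
      rw [div_lt_iff₀ hδ] at h5
      linarith [mul_comm δ (n:ℝ)]
    rw [Real.dist_eq, sub_zero]
    have hsb : |∑ i ∈ Finset.Icc 1 n,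
        (r ((i:ℝ)/n) (((i:ℝ)-1)/n) + r (((i:ℝ)-1)/n) ((i:ℝ)/n))|
        ≤ (n:ℝ) * ((ε/2) * ((1:ℝ)/n) ^ (min α 2)) := by
      calc |∑ i ∈ Finset.Icc 1 n, _| ≤ ∑ i ∈ Finset.Icc 1 n,
          |r ((i:ℝ)/n) (((i:ℝ)-1)/n) + r (((i:ℝ)-1)/n) ((i:ℝ)/n)| :=
            Finset.abs_sum_le_sum_abs _ _
        _ ≤ ∑ i ∈ Finset.Icc 1 n, ((ε/2) * ((1:ℝ)/n) ^ (min α 2)) := by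
            apply Finset.sum_le_sum
            intro i hi
            rw [Finset.mem_Icc] at hi
            obtain ⟨ha, hb, habs, habs'⟩ := hmem n hn1 i hi.1 hi.2
            have e1 : |r ((i:ℝ)/n) (((i:ℝ)-1)/n)| ≤ (ε/4) * ((1:ℝ)/n) ^ (min α 2) := by
              have := hrb _ ha _ hb (by rw [habs]; exact hinv)
              rwa [habs] at this
            have e2 : |r (((i:ℝ)-1)/n) ((i:ℝ)/n)| ≤ (ε/4) * ((1:ℝ)/n) ^ (min α 2) := by
              have := hrb _ hb _ ha (by rw [habs']; exact hinv)
              rwa [habs'] at this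
            calc |r ((i:ℝ)/n) (((i:ℝ)-1)/n) + r (((i:ℝ)-1)/n) ((i:ℝ)/n)|
                ≤ |r ((i:ℝ)/n) (((i:ℝ)-1)/n)| + |r (((i:ℝ)-1)/n) ((i:ℝ)/n)| := abs_add_le _ _
              _ ≤ (ε/4) * ((1:ℝ)/n) ^ (min α 2) + (ε/4) * ((1:ℝ)/n) ^ (min α 2) :=
                  add_le_add e1 e2
              _ = (ε/2) * ((1:ℝ)/n) ^ (min α 2) := by ring
        _ = (n:ℝ) * ((ε/2) * ((1:ℝ)/n) ^ (min α 2)) := by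
            rw [Finset.sum_const, Nat.card_Icc, nsmul_eq_mul]
            congr 1
            try simp
    calc |(n:ℝ) ^ (α11 - 1) * ∑ i ∈ Finset.Icc 1 n,
          (r ((i:ℝ)/n) (((i:ℝ)-1)/n) + r (((i:ℝ)-1)/n) ((i:ℝ)/n))|
        = (n:ℝ) ^ (α11 - 1) * |∑ i ∈ Finset.Icc 1 n,
          (r ((i:ℝ)/n) (((i:ℝ)-1)/n) + r (((i:ℝ)-1)/n) ((i:ℝ)/n))| := by
          rw [abs_mul, abs_of_nonneg (Real.rpow_nonneg hn0.le _)]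
      _ ≤ (n:ℝ) ^ (α11 - 1) * ((n:ℝ) * ((ε/2) * ((1:ℝ)/n) ^ (min α 2))) :=
          mul_le_mul_of_nonneg_left hsb (Real.rpow_nonneg hn0.le _)
      _ = (ε/2) * (n:ℝ) ^ (α11 - min α 2) := hpowgen (ε/2) (min α 2) n hn1
      _ ≤ (ε/2) * 1 := by
          apply mul_le_mul_of_nonneg_left _ (by linarith)
          apply Real.rpow_le_one_of_one_le_of_nonpos
          · exact_mod_cast hn1
          · linarith
      _ < ε := by linarith
  -- limit of the Γα Riemann-type sums
  have hGcont : ContinuousOn (fun q : ℝ × ℝ => Γα q.1 q.2)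
      (Set.Icc 0 1 ×ˢ Set.Icc 0 1) := (hΓα.continuousOn).mono hUsub
  have hP := offdiag_sum_tendsto hGcont
  constructor
  · -- case α11 < α
    intro hlt
    have hc : Tendsto (fun n : ℕ => (n:ℝ) ^ (α11 - α)) atTop (𝓝 0) :=
      hrpow0 _ (by linarith)
    have hB : Tendsto (fun n : ℕ => (n:ℝ) ^ (α11 - α) * ((1/(n:ℝ)) *
        ∑ i ∈ Finset.Icc 1 n,
          (Γα ((i:ℝ)/n) (((i:ℝ)-1)/n) + Γα (((i:ℝ)-1)/n) ((i:ℝ)/n)))) atTop (𝓝 0) := by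
      have := hc.mul hP
      simpa using this
    have hRlim := hResid (le_min (le_of_lt hlt) (le_of_lt hα11lt))
    have hfinal := (hA.sub hB).sub hRlim
    rw [sub_zero, sub_zero] at hfinal
    apply hfinal.congr'
    filter_upwards [eventually_ge_atTop 1] with n hn
    exact (hsum_eq n hn).symm
  · -- case α = α11
    intro heq
    subst heq
    have hB : Tendsto (fun n : ℕ => (n:ℝ) ^ (α - α) * ((1/(n:ℝ)) *
        ∑ i ∈ Finset.Icc 1 n,
          (Γα ((i:ℝ)/n) (((i:ℝ)-1)/n) + Γα (((i:ℝ)-1)/n) ((i:ℝ)/n)))) atTop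
        (𝓝 (2 * ∫ s in (0:ℝ)..1, Γα s s)) := by
      apply hP.congr
      intro n
      rw [sub_self, Real.rpow_zero, one_mul]
    have hRlim := hResid (le_min le_rfl (by linarith))
    have hfinal := (hA.sub hB).sub hRlim
    rw [sub_zero, zero_sub] at hfinal
    have : -(2 * ∫ s in (0:ℝ)..1, Γα s s) = -2 * ∫ s in (0:ℝ)..1, Γα s s := by ring
    rw [this] at hfinal
    apply hfinal.congr'
    filter_upwards [eventually_ge_atTop 1] with n hn
    exact (hsum_eq n hn).symm
end
end

section
/- Let K : ℝ → ℝ be an even function such that K(t) = a₀ + a₂·t² + c·|t|^α + o(|t|²) as t → 0, where a₀, a₂, c ∈ ℝ and α > 2, and let λ > 0. For each n ≥ 1 let s_i = i/n for 0 ≤ i ≤ n, let ρ = exp(−λ/n), and let Σ be the (n+1)×(n+1) real matrix with entries Σ_{ij} = ρ^{|i−j|} = exp(−λ|s_i − s_j|); Σ is positive definite, hence invertible. Then Σ_{i=0}^n Σ_{j=0}^n (Σ^{−1})_{ij} · K(|s_i − s_j|) converges to a₀·(1 + λ/2) − a₂/λ as n → ∞. -/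
/-!
With `ρ = exp (-λ / n)`, `expCovMatrix n λ` is the Kac–Murdock–Szegő matrix `ρ ^ |i - j|`, whose
inverse is `(1 - ρ²)⁻¹` times a tridiagonal matrix. Hence the double sum only sees `K 0` and
`K (1/n)`: it equals `(1 + n(1-ρ)/(1+ρ)) K 0 - 2ρ · n²(K (1/n) - K 0) / (n(1-ρ)(1+ρ))`.
The limit follows from `n(1 - ρ) → λ`, `ρ → 1` and `n²(K (1/n) - K 0) → a₂`, where the last
uses `|t|^α = o(t²)` for `α > 2`.
-/

open Filter Asymptotics
open scoped Topology

noncomputable section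

/-- The exponential working covariance matrix over the grid `s_i = i/n`, `0 ≤ i ≤ n`:
`Σ_{ij} = exp(−λ |s_i − s_j|)`. -/
def expCovMatrix (n : ℕ) (lam : ℝ) : Matrix (Fin (n + 1)) (Fin (n + 1)) ℝ :=
  Matrix.of fun i j => Real.exp (-lam * |((i : ℕ) : ℝ) / n - ((j : ℕ) : ℝ) / n|)

open Finset

theorem Nat.cast_dist {R : Type*} [Ring R] [LinearOrder R] [IsStrictOrderedRing R] (i j : ℕ) :
    (Nat.dist i j : R) = |(i : R) - j| := by
  rw [Nat.dist_eq_max_sub_min, Nat.cast_sub min_le_max, Nat.cast_max, Nat.cast_min,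
    max_sub_min_eq_abs']

theorem abs_natCast_div_sub_natCast_div (i j n : ℕ) :
    |(i : ℝ) / n - (j : ℝ) / n| = Nat.dist i j / n := by
  rw [div_sub_div_same, abs_div, Nat.abs_cast, Nat.cast_dist]

def kmsMatrix (n : ℕ) (ρ : ℝ) : Matrix (Fin (n + 1)) (Fin (n + 1)) ℝ :=
  Matrix.of fun i j => ρ ^ Nat.dist i j

def kmsTridiag (n : ℕ) (ρ : ℝ) (i j : ℕ) : ℝ :=
  (if j = i then (if i = 0 ∨ i = n then 1 else 1 + ρ ^ 2) else 0)
    - (if j + 1 = i then ρ else 0) - (if j = i + 1 then ρ else 0)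

theorem sum_range_kmsTridiag_mul {n i : ℕ} (hi : i ≤ n) (ρ : ℝ) (h : ℕ → ℝ) :
    ∑ j ∈ range (n + 1), kmsTridiag n ρ i j * h j =
      (if i = 0 ∨ i = n then 1 else 1 + ρ ^ 2) * h i
        - (if i = 0 then 0 else ρ * h (i - 1)) - (if i = n then 0 else ρ * h (i + 1)) := by
  rcases i with _ | i <;>
    simp only [kmsTridiag, sub_mul, ite_mul, one_mul, zero_mul, sum_sub_distrib, sum_ite_eq',
      mem_range, Nat.lt_succ_of_le hi, Nat.add_right_cancel_iff, Nat.add_eq_zero_iff, one_ne_zero,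
      and_false, true_or, sum_const_zero, add_tsub_cancel_right, reduceIte] <;>
    split_ifs <;> first | rfl | omega

theorem sum_range_kmsTridiag_mul_pow_dist {n i k : ℕ} (hn : 1 ≤ n) (hi : i ≤ n) (hk : k ≤ n)
    (ρ : ℝ) :
    ∑ j ∈ range (n + 1), kmsTridiag n ρ i j * ρ ^ Nat.dist j k =
      if i = k then 1 - ρ ^ 2 else 0 := by
  have dist_eq (a b d : ℕ) (h : a - b + (b - a) = d) : Nat.dist a b = d := h
  rw [sum_range_kmsTridiag_mul hi]
  rcases lt_trichotomy i k with hik | rfl | hki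
  · obtain ⟨m, rfl⟩ : ∃ m, k = i + m + 1 := ⟨k - i - 1, by omega⟩
    simp only [show i ≠ n by omega, show i ≠ i + m + 1 by omega, or_false, if_false]
    rw [dist_eq i _ (m + 1) (by omega), dist_eq (i + 1) _ m (by omega)]
    split_ifs with h0
    · ring
    · rw [dist_eq (i - 1) _ (m + 2) (by omega)]
      ring
  · rw [Nat.dist_self, if_pos rfl]
    rcases (show i = 0 ∨ i = n ∨ (i ≠ 0 ∧ i ≠ n) by omega) with rfl | rfl | ⟨h0, hn'⟩
    · simp only [true_or, if_true, show 0 ≠ n by omega, if_false, dist_eq 1 0 1 rfl]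
      ring
    · simp only [or_true, if_true, show i ≠ 0 by omega, if_false,
        dist_eq (i - 1) i 1 (by omega)]
      ring
    · simp only [h0, hn', or_self, if_false, dist_eq (i - 1) i 1 (by omega),
        dist_eq (i + 1) i 1 (by omega)]
      ring
  · obtain ⟨m, rfl⟩ : ∃ m, i = k + m + 1 := ⟨i - k - 1, by omega⟩
    simp only [show k + m + 1 ≠ 0 by omega, show k + m + 1 ≠ k by omega, false_or, if_false]
    rw [dist_eq (k + m + 1) _ (m + 1) (by omega), dist_eq (k + m + 1 - 1) _ m (by omega)]
    split_ifs with hn'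
    · ring
    · rw [dist_eq (k + m + 1 + 1) _ (m + 2) (by omega)]
      ring

theorem kmsMatrix_inv {n : ℕ} (hn : 1 ≤ n) {ρ : ℝ} (hρ : ρ ^ 2 ≠ 1) :
    (kmsMatrix n ρ)⁻¹ =
      (1 - ρ ^ 2)⁻¹ • Matrix.of fun i j : Fin (n + 1) => kmsTridiag n ρ i j := by
  refine Matrix.inv_eq_left_inv ?_
  ext i k
  have hρ' : 1 - ρ ^ 2 ≠ 0 := sub_ne_zero.mpr hρ.symm
  rw [Matrix.smul_mul, Matrix.smul_apply, Matrix.mul_apply, Matrix.one_apply]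
  simp only [kmsMatrix, Matrix.of_apply]
  rw [Fin.sum_univ_eq_sum_range (fun j => kmsTridiag n ρ i j * ρ ^ Nat.dist j k),
    sum_range_kmsTridiag_mul_pow_dist hn i.is_le k.is_le, smul_eq_mul]
  split_ifs with h1 h2 h2
  · exact inv_mul_cancel₀ hρ'
  · exact absurd (Fin.ext h1) h2
  · exact absurd (congrArg Fin.val h2) h1
  · exact mul_zero _

theorem sum_range_kmsTridiag_mul_dist {n i : ℕ} (hn : 1 ≤ n) (hi : i ≤ n) (ρ : ℝ)
    (g : ℕ → ℝ) :
    ∑ j ∈ range (n + 1), kmsTridiag n ρ i j * g (Nat.dist i j) =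
      if i = 0 ∨ i = n then g 0 - ρ * g 1 else (1 + ρ ^ 2) * g 0 - 2 * ρ * g 1 := by
  have dist_eq (a b d : ℕ) (h : a - b + (b - a) = d) : Nat.dist a b = d := h
  rw [sum_range_kmsTridiag_mul hi, Nat.dist_self]
  rcases (show i = 0 ∨ i = n ∨ (i ≠ 0 ∧ i ≠ n) by omega) with rfl | rfl | ⟨h0, hn'⟩
  · simp only [true_or, if_true, show 0 ≠ n by omega, if_false, dist_eq 0 1 1 rfl]
    ring
  · simp only [or_true, if_true, show i ≠ 0 by omega, if_false,
      dist_eq i (i - 1) 1 (by omega)]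
    ring
  · simp only [h0, hn', or_self, if_false, dist_eq i (i - 1) 1 (by omega),
      dist_eq i (i + 1) 1 (by omega)]
    ring

theorem sum_range_ite_endpoints {M : Type*} [AddCommGroup M] {n : ℕ} (hn : 1 ≤ n) (a b : M) :
    ∑ i ∈ range (n + 1), (if i = 0 ∨ i = n then a else b) = 2 • a + (n - 1) • b := by
  obtain ⟨m, rfl⟩ : ∃ m, n = m + 1 := ⟨n - 1, by omega⟩
  rw [sum_range_succ, sum_range_succ', sum_congr rfl fun i hi => if_neg (by simp at hi; omega)]
  simp only [sum_const, card_range, Nat.right_eq_add, Nat.add_eq_zero_iff, one_ne_zero, and_false,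
    or_false, reduceIte, or_true, two_nsmul, add_tsub_cancel_right]
  abel

theorem sum_kmsMatrix_inv_mul_toeplitz {n : ℕ} (hn : 1 ≤ n) {ρ : ℝ} (hρ : ρ ^ 2 ≠ 1)
    (g : ℕ → ℝ) :
    ∑ i, ∑ j, (kmsMatrix n ρ)⁻¹ i j * g (Nat.dist i j) =
      (2 * (g 0 - ρ * g 1) + (n - 1) * ((1 + ρ ^ 2) * g 0 - 2 * ρ * g 1)) / (1 - ρ ^ 2) := by
  have hrow (i : Fin (n + 1)) : ∑ j, (kmsMatrix n ρ)⁻¹ i j * g (Nat.dist i j) =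
      (1 - ρ ^ 2)⁻¹ * if (i : ℕ) = 0 ∨ (i : ℕ) = n then g 0 - ρ * g 1
        else (1 + ρ ^ 2) * g 0 - 2 * ρ * g 1 := by
    simp only [kmsMatrix_inv hn hρ, Matrix.smul_apply, Matrix.of_apply, smul_eq_mul,
      mul_assoc (1 - ρ ^ 2)⁻¹]
    rw [← mul_sum, Fin.sum_univ_eq_sum_range (fun j => kmsTridiag n ρ i j * g (Nat.dist i j)),
      sum_range_kmsTridiag_mul_dist hn i.is_le]
  rw [sum_congr rfl fun i _ => hrow i, ← mul_sum,
    Fin.sum_univ_eq_sum_range (fun i => if i = 0 ∨ i = n then g 0 - ρ * g 1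
      else (1 + ρ ^ 2) * g 0 - 2 * ρ * g 1), sum_range_ite_endpoints hn, inv_mul_eq_div,
    nsmul_eq_mul, nsmul_eq_mul, Nat.cast_sub hn, Nat.cast_ofNat, Nat.cast_one]

theorem expCovMatrix_eq_kmsMatrix (n : ℕ) (lam : ℝ) :
    expCovMatrix n lam = kmsMatrix n (Real.exp (-lam / n)) := by
  ext i j
  rw [expCovMatrix, kmsMatrix, Matrix.of_apply, Matrix.of_apply, abs_natCast_div_sub_natCast_div,
    ← Real.exp_nat_mul]
  ring_nf

theorem HasDerivAt.tendsto_natCast_mul_sub {f : ℝ → ℝ} {f' : ℝ} (hf : HasDerivAt f f' 0) :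
    Tendsto (fun n : ℕ => n * (f (1 / n) - f 0)) atTop (𝓝 f') := by
  have hlim : Tendsto (fun n : ℕ => (1 : ℝ) / n) atTop (𝓝[≠] 0) :=
    tendsto_nhdsWithin_of_tendsto_nhds_of_eventually_within _ tendsto_one_div_atTop_nhds_zero_nat
      (eventually_ne_atTop 0 |>.mono fun n hn => by simpa using hn)
  refine (hasDerivAt_iff_tendsto_slope.mp hf |>.comp hlim).congr fun n => ?_
  simp [slope_def_field, mul_comm]

theorem Asymptotics.IsLittleO.tendsto_natCast_pow_mul_one_div {f : ℝ → ℝ} {k : ℕ}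
    (hf : f =o[𝓝 0] fun t => t ^ k) :
    Tendsto (fun n : ℕ => (n : ℝ) ^ k * f (1 / n)) atTop (𝓝 0) := by
  refine (hf.comp_tendsto tendsto_one_div_atTop_nhds_zero_nat).tendsto_div_nhds_zero.congr
    fun n => ?_
  simp [div_eq_mul_inv, mul_comm]

theorem abs_rpow_isLittleO_sq {α : ℝ} (hα : 2 < α) :
    (fun t : ℝ => |t| ^ α) =o[𝓝 0] fun t => t ^ 2 := by
  have hsmall : (fun t : ℝ => |t| ^ (α - 2)) =o[𝓝 0] fun _ => (1 : ℝ) := by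
    have h := (continuous_abs.tendsto (0 : ℝ)).rpow_const (p := α - 2) (Or.inr (by linarith))
    rwa [abs_zero, Real.zero_rpow (by linarith), ← isLittleO_one_iff ℝ] at h
  refine (hsmall.mul_isBigO (isBigO_refl (fun t : ℝ => t ^ 2) _)).congr (fun t => ?_)
    fun t => one_mul _
  rw [← sq_abs, ← Real.rpow_natCast, ← Real.rpow_add' (abs_nonneg t) (by linarith)]
  norm_num

theorem tendsto_natCast_sq_mul_sub_of_isLittleO {K : ℝ → ℝ} {a₀ a₂ : ℝ}
    (hK : (fun t => K t - (a₀ + a₂ * t ^ 2)) =o[𝓝 0] fun t => t ^ 2) :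
    Tendsto (fun n : ℕ => (n : ℝ) ^ 2 * (K (1 / n) - a₀)) atTop (𝓝 a₂) := by
  have h := hK.tendsto_natCast_pow_mul_one_div.const_add a₂
  rw [add_zero] at h
  refine h.congr' ?_
  filter_upwards [eventually_ne_atTop 0] with n hn
  field_simp
  ring

theorem tendsto_natCast_mul_one_sub_exp_neg_div (lam : ℝ) :
    Tendsto (fun n : ℕ => n * (1 - Real.exp (-lam / n))) atTop (𝓝 lam) := by
  have hf : HasDerivAt (fun x => -Real.exp (-lam * x)) lam 0 := by
    simpa using (((hasDerivAt_id (0 : ℝ)).const_mul (-lam)).exp).fun_neg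
  refine hf.tendsto_natCast_mul_sub.congr fun n => ?_
  simp only [mul_zero, Real.exp_zero, div_eq_mul_inv, one_mul]
  ring

theorem sum_expCovMatrix_inv_mul_eq {n : ℕ} (hn : 1 ≤ n) {lam : ℝ} (hlam : lam ≠ 0)
    (K : ℝ → ℝ) :
    ∑ i : Fin (n + 1), ∑ j : Fin (n + 1),
        (expCovMatrix n lam)⁻¹ i j * K (|((i : ℕ) : ℝ) / n - ((j : ℕ) : ℝ) / n|) =
      (2 * (K 0 - Real.exp (-lam / n) * K (1 / n)) + (n - 1) *
        ((1 + Real.exp (-lam / n) ^ 2) * K 0 - 2 * Real.exp (-lam / n) * K (1 / n))) /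
          (1 - Real.exp (-lam / n) ^ 2) := by
  have hρ : Real.exp (-lam / n) ^ 2 ≠ 1 := by
    rw [← Real.exp_nat_mul, Ne, Real.exp_eq_one_iff]
    have : (n : ℝ) ≠ 0 := by positivity
    simp [hlam, this]
  simp_rw [abs_natCast_div_sub_natCast_div, expCovMatrix_eq_kmsMatrix]
  rw [sum_kmsMatrix_inv_mul_toeplitz (g := fun d : ℕ => K (d / n)) hn hρ]
  simp

theorem gls_quadratic_form_mean_limit_general
    (K : ℝ → ℝ)
    (a₀ a₂ c α : ℝ) (hα : 2 < α)
    (hK : (fun t : ℝ => K t - (a₀ + a₂ * t ^ 2 + c * |t| ^ α)) =o[𝓝 (0 : ℝ)]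
      fun t : ℝ => t ^ 2)
    (lam : ℝ) (hlam : 0 < lam) :
    Tendsto
      (fun n : ℕ => ∑ i : Fin (n + 1), ∑ j : Fin (n + 1),
        (expCovMatrix n lam)⁻¹ i j * K (|((i : ℕ) : ℝ) / n - ((j : ℕ) : ℝ) / n|))
      atTop (𝓝 (a₀ * (1 + lam / 2) - a₂ / lam)) := by
  have hK₂ : (fun t => K t - (a₀ + a₂ * t ^ 2)) =o[𝓝 0] fun t => t ^ 2 :=
    (hK.add ((abs_rpow_isLittleO_sq hα).const_mul_left c)).congr_left fun t => by ring
  have hK₀ : K 0 = a₀ := by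
    simpa [sub_eq_zero] using hK₂.isBigO.eq_zero_imp.self_of_nhds (by simp)
  have hρ : Tendsto (fun n : ℕ => Real.exp (-lam / n)) atTop (𝓝 1) := by
    simpa [Function.comp_def] using
      (Real.continuous_exp.tendsto 0).comp (tendsto_const_div_atTop_nhds_zero_nat (-lam))
  have hlin := tendsto_natCast_mul_one_sub_exp_neg_div lam
  have hlim := ((hlin.div (hρ.const_add 1) (by norm_num)).const_add 1).mul_const a₀ |>.sub <|
    ((hρ.const_mul 2).mul (tendsto_natCast_sq_mul_sub_of_isLittleO hK₂)).div
      (hlin.mul (hρ.const_add 1)) (by positivity)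
  convert hlim.congr' ?_ using 2
  · field_simp
    ring
  filter_upwards [eventually_ge_atTop 1] with n hn
  rw [Pi.div_apply, Pi.div_apply, sum_expCovMatrix_inv_mul_eq hn hlam.ne' K, hK₀]
  set ρ := Real.exp (-lam / n)
  have hρ_lt : ρ < 1 :=
    Real.exp_lt_one_iff.mpr (div_neg_of_neg_of_pos (by linarith) (by positivity))
  have hρ_pos : 0 < ρ := Real.exp_pos _
  have h₁ : 1 - ρ ≠ 0 := by linarith
  have h₂ : 1 - ρ ^ 2 ≠ 0 := by nlinarith
  field_simp
  ring

/-- Lemma S3 of the paper. Let `K` be even with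
`K(t) = a₀ + a₂ t² + c |t|^α + o(t²)` as `t → 0`, `α > 2`, and let `Σ` be the exponential
working covariance matrix with rate `λ > 0` on the grid `s_i = i/n`. Then
`Σ_{i,j} (Σ⁻¹)_{ij} K(|s_i − s_j|) → a₀ (1 + λ/2) − a₂/λ`. -/
theorem gls_quadratic_form_mean_limit
    (K : ℝ → ℝ) (hKeven : ∀ t, K (-t) = K t)
    (a₀ a₂ c α : ℝ) (hα : 2 < α)
    (hK : (fun t : ℝ => K t - (a₀ + a₂ * t ^ 2 + c * |t| ^ α)) =o[𝓝 (0 : ℝ)]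
      fun t : ℝ => t ^ 2)
    (lam : ℝ) (hlam : 0 < lam) :
    Tendsto
      (fun n : ℕ => ∑ i : Fin (n + 1), ∑ j : Fin (n + 1),
        (expCovMatrix n lam)⁻¹ i j * K (|((i : ℕ) : ℝ) / n - ((j : ℕ) : ℝ) / n|))
      atTop (𝓝 (a₀ * (1 + lam / 2) - a₂ / lam)) :=
  gls_quadratic_form_mean_limit_general K a₀ a₂ c α hα hK lam hlam
end
end

section
/- Let d ≥ 1 and let A : ℝ → ℝ be an even function that is real-analytic on all of ℝ. Then the function F : ℝ^d → ℝ defined by F(u) = A(‖u‖) (Euclidean norm) is smooth, and there exists an even function A¹ : ℝ → ℝ, real-analytic on all of ℝ, such that for every u ∈ ℝ^d, Σ_{g=1}^d Σ_{g'=1}^d (∂²/∂u_{g'}²)(∂²/∂u_g²) F evaluated at u equals A¹(‖u‖), where ∂/∂u_g denotes the partial derivative in the g-th coordinate direction of ℝ^d. -/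
open Filter Asymptotics
open scoped Topology

open Set
open scoped ContDiff

noncomputable section



private lemma analyticAt_rlog {x : ℝ} (hx : 0 < x) : AnalyticAt ℝ Real.log x := by
  have h1 : AnalyticAt ℝ (fun y : ℝ => (Complex.log (y : ℂ)).re) x := by
    have h2 : AnalyticAt ℝ (fun y : ℝ => Complex.log (y : ℂ)) x :=
      ((analyticAt_clog (Complex.ofReal_mem_slitPlane.2 hx)).restrictScalars).comp
        (Complex.ofRealCLM.analyticAt x)
    exact (Complex.reCLM.analyticAt _).comp h2
  exact h1.congr (Filter.Eventually.of_forall fun y => Complex.log_ofReal_re y)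

private lemma analyticAt_rsqrt {x : ℝ} (hx : 0 < x) : AnalyticAt ℝ Real.sqrt x := by
  have h1 : AnalyticAt ℝ (fun y : ℝ => Real.exp (Real.log y * (1/2 : ℝ))) x :=
    ((analyticAt_rlog hx).mul analyticAt_const).rexp
  apply h1.congr
  filter_upwards [Ioi_mem_nhds hx] with y hy
  rw [← Real.rpow_def_of_pos hy, Real.sqrt_eq_rpow]

/-- An even globally analytic function factors as `B ∘ (·^2)` with `B` analytic on a
neighborhood of `[0, ∞)`. -/
private lemma exists_B (A : ℝ → ℝ) (hAeven : ∀ t, A (-t) = A t)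
    (hA : AnalyticOnNhd ℝ A Set.univ) :
    ∃ (c : ℝ) (B : ℝ → ℝ), 0 < c ∧ AnalyticOnNhd ℝ B (Ioo (-c) c ∪ Ioi 0) ∧
      ∀ t, B (t ^ 2) = A t := by
  obtain ⟨p, hp⟩ := hA 0 trivial
  obtain ⟨r, hpr⟩ := hp
  obtain ⟨ρ, hρ0, hρr⟩ : ∃ ρ : NNReal, 0 < ρ ∧ (ρ : ENNReal) < r := by
    rcases ENNReal.lt_iff_exists_nnreal_btwn.mp hpr.r_pos with ⟨ρ, h1, h2⟩
    exact ⟨ρ, by exact_mod_cast h1, h2⟩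
  have hρrad : (ρ : ENNReal) < p.radius := lt_of_lt_of_le hρr hpr.r_le
  have hball : HasFPowerSeriesOnBall A p 0 ρ :=
    hpr.mono (by exact_mod_cast hρ0) hρr.le
  -- odd coefficients vanish
  have hodd : ∀ n, Odd n → p.coeff n = 0 := by
    intro n hn
    have hsmul := hball.factorial_smul (1 : ℝ) n
    have hco : p n (fun _ => (1:ℝ)) = p.coeff n := rfl
    have hit : iteratedFDeriv ℝ n A 0 (fun _ => (1:ℝ)) = iteratedDeriv n A 0 :=
      (iteratedDeriv_eq_iteratedFDeriv).symm
    have hzero : iteratedDeriv n A 0 = 0 := by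
      have hAe : A = fun x => A (-x) := funext fun x => (hAeven x).symm
      have hneg := iteratedDeriv_comp_neg n A 0
      rw [← hAe, neg_zero] at hneg
      rcases hn with ⟨m, hm⟩
      have hpow : ((-1 : ℝ)) ^ n = -1 := Odd.neg_one_pow ⟨m, by omega⟩
      rw [hpow] at hneg
      have : iteratedDeriv n A 0 = -iteratedDeriv n A 0 := by
        simpa using hneg
      linarith
    rw [hco, hit, hzero] at hsmul
    have hz : (n.factorial : ℝ) * p.coeff n = 0 := by
      rw [← nsmul_eq_mul]; exact hsmul
    exact (mul_eq_zero.mp hz).resolve_left (Nat.cast_ne_zero.mpr n.factorial_ne_zero)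
  -- the even-part series
  set Q : FormalMultilinearSeries ℝ ℝ ℝ :=
    FormalMultilinearSeries.ofScalars ℝ (fun k => p.coeff (2 * k)) with hQdef
  -- coefficient bound for p
  obtain ⟨C, hC0, hCb⟩ := p.norm_mul_pow_le_of_lt_radius hρrad
  -- radius bound for Q
  have hQrad : (ρ ^ 2 : NNReal) ≤ Q.radius := by
    apply Q.le_radius_of_bound C
    intro n
    have h1 : ‖Q n‖ ≤ ‖p.coeff (2 * n)‖ :=
      le_of_eq (FormalMultilinearSeries.ofScalars_norm ℝ (fun k => p.coeff (2 * k)) n)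
    have h2 : ‖p.coeff (2*n)‖ ≤ ‖p (2*n)‖ := by
      have hle := (p (2*n)).le_opNorm (fun _ => (1:ℝ))
      have : p.coeff (2*n) = p (2*n) (fun _ => (1:ℝ)) := rfl
      rw [this]
      simpa using hle
    calc ‖Q n‖ * ((ρ:ℝ)^2) ^ n ≤ ‖p (2*n)‖ * ((ρ:ℝ))^(2*n) := by
          rw [pow_mul]
          exact mul_le_mul (h1.trans h2) le_rfl (by positivity) (norm_nonneg _)
      _ ≤ C := hCb (2*n)
  have hρ2 : (0:ℝ) < (ρ:ℝ)^2 := by positivity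
  have hQpos : (0 : ENNReal) < Q.radius := lt_of_lt_of_le (by exact_mod_cast pow_pos hρ0 2) hQrad
  have hQball : HasFPowerSeriesOnBall Q.sum Q 0 ((ρ^2 : NNReal)) :=
    (Q.hasFPowerSeriesOnBall hQpos).mono (by exact_mod_cast pow_pos hρ0 2)
      (by exact_mod_cast hQrad)
  -- identity : Q.sum (t^2) = A t for |t| < ρ
  have hkey : ∀ t : ℝ, |t| < (ρ:ℝ) → Q.sum (t^2) = A t := by
    intro t ht
    have hmem : t ∈ Metric.eball (0:ℝ) ρ := by
      rw [EMetric.mem_ball, edist_zero_right]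
      exact_mod_cast (by simpa [Real.norm_eq_abs] using ht : ‖t‖ < (ρ:ℝ))
    have hsum := hball.hasSum hmem
    simp only [zero_add] at hsum
    have hsum' : HasSum (fun n => t ^ n • p.coeff n) (A t) := by
      have : (fun n => p n fun _ => t) = fun n => t ^ n • p.coeff n := by
        funext n; exact p.apply_eq_pow_smul_coeff
      rwa [this] at hsum
    have heven : HasSum (fun k => t ^ (2*k) • p.coeff (2*k)) (A t) := by
      have hinj : Function.Injective (fun k : ℕ => 2 * k) := fun a b h => by
        simp only at h; omega
      refine (Function.Injective.hasSum_iff hinj ?_).mpr hsum'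
      intro m hm
      rcases Nat.even_or_odd m with he | ho
      · exfalso; rcases he with ⟨j, hj⟩; exact hm ⟨j, by simp only; omega⟩
      · simp [hodd m ho]
    have : HasSum (fun k => Q k fun _ => t^2) (A t) := by
      have : (fun k => Q k fun _ => (t^2:ℝ)) = fun k => t ^ (2*k) • p.coeff (2*k) := by
        funext k
        rw [hQdef, FormalMultilinearSeries.ofScalars_apply_eq, smul_eq_mul, smul_eq_mul,
          ← pow_mul, mul_comm (p.coeff (2*k)) _]
      rwa [this]
    exact this.tsum_eq
  -- define B
  refine ⟨(ρ:ℝ)^2, fun s => if s ≤ 0 then Q.sum s else A (Real.sqrt s), hρ2, ?_, ?_⟩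
  · intro x hx
    rcases hx with hx | hx
    · -- near zero : agrees with Q.sum on Ioo
      have hQan : AnalyticAt ℝ Q.sum x := by
        apply (hQball.analyticOnNhd) x
        rw [EMetric.mem_ball, edist_zero_right]
        have : ‖x‖ < (ρ:ℝ)^2 := by
          rw [Real.norm_eq_abs, abs_lt]; exact ⟨hx.1, hx.2⟩
        exact_mod_cast (by simpa using this : ‖x‖ < ((ρ:ℝ)^2))
      apply hQan.congr
      filter_upwards [Ioo_mem_nhds hx.1 hx.2] with y hy
      by_cases hy0 : y ≤ 0
      · simp [hy0]
      · push_neg at hy0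
        have h1 : Real.sqrt y ^ 2 = y := Real.sq_sqrt hy0.le
        have h2 : |Real.sqrt y| < (ρ:ℝ) := by
          rw [abs_of_nonneg (Real.sqrt_nonneg y)]
          have := Real.sqrt_lt_sqrt hy0.le hy.2
          rwa [Real.sqrt_sq (by positivity : (0:ℝ) ≤ (ρ:ℝ))] at this
        simp only [not_le.mpr hy0, if_false]
        rw [← hkey _ h2, h1]
    · -- positive : agrees with A ∘ sqrt
      have han : AnalyticAt ℝ (fun s => A (Real.sqrt s)) x :=
        (hA _ trivial).comp (analyticAt_rsqrt hx)
      apply han.congr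
      filter_upwards [Ioi_mem_nhds hx] with y hy
      simp [not_le.mpr (Set.mem_Ioi.mp hy)]
  · intro t
    by_cases ht : t = 0
    · subst ht
      simpa using hkey 0 (by simpa using hρ0)
    · have h1 : (0:ℝ) < t^2 :=
        lt_of_le_of_ne (sq_nonneg t) (Ne.symm (pow_ne_zero 2 ht))
      simp only [not_le.mpr h1, if_false]
      rw [Real.sqrt_sq_eq_abs]
      rcases abs_choice t with h | h
      · rw [h]
      · rw [h, hAeven]

section PD

variable {E' : Type*} [NormedAddCommGroup E'] [NormedSpace ℝ E']

/-- directional (partial) derivative operator -/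
private def pd (v : E') (f : E' → ℝ) : E' → ℝ := fun y => fderiv ℝ f y v

private lemma pd_analytic {f : E' → ℝ} (hf : AnalyticOnNhd ℝ f Set.univ) (v : E') :
    AnalyticOnNhd ℝ (pd v f) Set.univ := by
  intro x _
  have h1 : AnalyticAt ℝ (fderiv ℝ f) x := hf.fderiv x trivial
  exact ((ContinuousLinearMap.apply ℝ ℝ v).analyticAt _).comp h1

private lemma iteratedFDeriv_snoc {f : E' → ℝ} (hf : AnalyticOnNhd ℝ f Set.univ)
    {n : ℕ} (x : E') (m : Fin n → E') (v : E') :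
    iteratedFDeriv ℝ (n + 1) f x (Fin.snoc m v) = iteratedFDeriv ℝ n (pd v f) x m := by
  rw [iteratedFDeriv_succ_apply_right, Fin.init_snoc, Fin.snoc_last]
  have hcd : ContDiff ℝ (⊤ : WithTop ℕ∞) (fderiv ℝ f) := (hf.fderiv).contDiff
  have hcl := (ContinuousLinearMap.apply ℝ ℝ v).iteratedFDeriv_comp_left
    (f := fderiv ℝ f) (hcd.contDiffAt (x := x)) (le_top : (n : WithTop ℕ∞) ≤ ⊤)
  have hpd : pd v f = (ContinuousLinearMap.apply ℝ ℝ v) ∘ (fderiv ℝ f) := rfl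
  rw [hpd, hcl]
  rfl

private lemma iteratedFDeriv_four {f : E' → ℝ} (hf : AnalyticOnNhd ℝ f Set.univ)
    (x : E') (a b c v : E') :
    iteratedFDeriv ℝ 4 f x ![a, b, c, v] = pd a (pd b (pd c (pd v f))) x := by
  have h1 : (![a, b, c, v] : Fin 4 → E') = Fin.snoc ![a, b, c] v := by
    funext i; fin_cases i <;> simp [Fin.snoc, Matrix.cons_val_zero, Matrix.cons_val_one] <;> rfl
  have h2 : (![a, b, c] : Fin 3 → E') = Fin.snoc ![a, b] c := by
    funext i; fin_cases i <;> simp [Fin.snoc, Matrix.cons_val_zero, Matrix.cons_val_one] <;> rfl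
  have h3 : (![a, b] : Fin 2 → E') = Fin.snoc ![a] b := by
    funext i; fin_cases i <;> simp [Fin.snoc, Matrix.cons_val_zero, Matrix.cons_val_one] <;> rfl
  have h4 : (![a] : Fin 1 → E') = Fin.snoc ![] a := by
    funext i; fin_cases i <;> simp [Fin.snoc, Matrix.cons_val_zero, Matrix.cons_val_one] <;> rfl
  rw [h1, iteratedFDeriv_snoc hf, h2, iteratedFDeriv_snoc (pd_analytic hf v),
    h3, iteratedFDeriv_snoc (pd_analytic (pd_analytic hf v) c),
    h4, iteratedFDeriv_snoc (pd_analytic (pd_analytic (pd_analytic hf v) c) b),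
    iteratedFDeriv_zero_apply]

private lemma pd_sum {ι : Type*} [Fintype ι] {f : ι → E' → ℝ}
    (hf : ∀ i, AnalyticOnNhd ℝ (f i) Set.univ) (v : E') :
    pd v (fun u => ∑ i, f i u) = fun u => ∑ i, pd v (f i) u := by
  funext u
  have : fderiv ℝ (fun u => ∑ i, f i u) u = ∑ i, fderiv ℝ (f i) u :=
    fderiv_fun_sum (fun i _ => ((hf i) u trivial).differentiableAt)
  simp only [pd, this, ContinuousLinearMap.sum_apply]

end PD

section Euclid

variable {d : ℕ}

private def qd (d : ℕ) : EuclideanSpace ℝ (Fin d) → ℝ := fun u => ∑ i, u i ^ 2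

private def ed (g : Fin d) : EuclideanSpace ℝ (Fin d) := EuclideanSpace.single g (1 : ℝ)

private lemma qd_eq_norm (u : EuclideanSpace ℝ (Fin d)) : qd d u = ‖u‖ ^ 2 := by
  rw [EuclideanSpace.norm_eq, Real.sq_sqrt (Finset.sum_nonneg fun i _ => sq_nonneg _)]
  simp [qd, sq_abs]

private lemma qd_nonneg (u : EuclideanSpace ℝ (Fin d)) : 0 ≤ qd d u :=
  (qd_eq_norm u) ▸ sq_nonneg _

private lemma hasFDerivAt_qd (u : EuclideanSpace ℝ (Fin d)) :
    HasFDerivAt (qd d)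
      (∑ i, (2 * u i) • (EuclideanSpace.proj i : EuclideanSpace ℝ (Fin d) →L[ℝ] ℝ)) u := by
  have h : ∀ i : Fin d, HasFDerivAt (fun u : EuclideanSpace ℝ (Fin d) => u i ^ 2)
      ((2 * u i) • (EuclideanSpace.proj i : EuclideanSpace ℝ (Fin d) →L[ℝ] ℝ)) u := by
    intro i
    have h1 : HasFDerivAt (fun u : EuclideanSpace ℝ (Fin d) => u i)
        (EuclideanSpace.proj i : EuclideanSpace ℝ (Fin d) →L[ℝ] ℝ) u := by
      exact (EuclideanSpace.proj (𝕜 := ℝ) i).hasFDerivAt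
    have h2 := h1.fun_mul h1
    have h3 : HasFDerivAt (fun u : EuclideanSpace ℝ (Fin d) => u i ^ 2)
        (u i • (EuclideanSpace.proj i : EuclideanSpace ℝ (Fin d) →L[ℝ] ℝ)
          + u i • (EuclideanSpace.proj i : EuclideanSpace ℝ (Fin d) →L[ℝ] ℝ)) u := by
      simpa [pow_two] using h2
    have h4 : (2 * u i) • (EuclideanSpace.proj i : EuclideanSpace ℝ (Fin d) →L[ℝ] ℝ)
        = u i • (EuclideanSpace.proj i : EuclideanSpace ℝ (Fin d) →L[ℝ] ℝ)
          + u i • (EuclideanSpace.proj i : EuclideanSpace ℝ (Fin d) →L[ℝ] ℝ) := by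
      rw [two_mul, add_smul]
    rw [h4]; exact h3
  exact HasFDerivAt.fun_sum (fun i _ => h i)

private lemma fderiv_qd_single (u : EuclideanSpace ℝ (Fin d)) (g : Fin d) :
    fderiv ℝ (qd d) u (ed g) = 2 * u g := by
  rw [(hasFDerivAt_qd u).fderiv]
  rw [ContinuousLinearMap.sum_apply]
  have : ∀ i : Fin d, ((2 * u i) • (EuclideanSpace.proj i :
      EuclideanSpace ℝ (Fin d) →L[ℝ] ℝ)) (ed g) = if g = i then 2 * u i else 0 := by
    intro i
    simp only [ContinuousLinearMap.smul_apply, PiLp.proj_apply, ed,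
      EuclideanSpace.single_apply, smul_eq_mul]
    by_cases h : g = i
    · simp [h]
    · simp [h, Ne.symm h]
  simp only [this]
  simp

private lemma qd_analytic : AnalyticOnNhd ℝ (qd d) Set.univ := by
  intro x _
  apply Finset.analyticAt_fun_sum
  intro i _
  exact ((EuclideanSpace.proj i : EuclideanSpace ℝ (Fin d) →L[ℝ] ℝ).analyticAt x).pow 2

end Euclid

section Lap

variable {d : ℕ}

/-- the radial bi-Laplacian symbol -/
private def lap (d : ℕ) (φ : ℝ → ℝ) : ℝ → ℝ :=
  fun s => 2 * d * deriv φ s + 4 * s * deriv (deriv φ) s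

private lemma lap_analytic {φ : ℝ → ℝ} {U : Set ℝ} (hφ : AnalyticOnNhd ℝ φ U) :
    AnalyticOnNhd ℝ (lap d φ) U := by
  intro x hx
  have h1 : AnalyticAt ℝ (deriv φ) x := hφ.deriv x hx
  have h2 : AnalyticAt ℝ (deriv (deriv φ)) x := (hφ.deriv).deriv x hx
  have h3 : AnalyticAt ℝ (fun s : ℝ => 4 * s) x := analyticAt_const.mul analyticAt_id
  exact (analyticAt_const.mul h1).add (h3.mul h2)

end Lap

section Comp

variable {d : ℕ}

private lemma pd_comp (φ : ℝ → ℝ) {U : Set ℝ} (hφ : AnalyticOnNhd ℝ φ U)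
    (hq : ∀ u : EuclideanSpace ℝ (Fin d), qd d u ∈ U) (g : Fin d) :
    pd (ed g) (fun u => φ (qd d u)) = fun u => deriv φ (qd d u) * (2 * u g) := by
  funext u
  have hφd : HasDerivAt φ (deriv φ (qd d u)) (qd d u) :=
    ((hφ _ (hq u)).differentiableAt).hasDerivAt
  have hqD : HasFDerivAt (qd d) (fderiv ℝ (qd d) u) u :=
    (hasFDerivAt_qd u).differentiableAt.hasFDerivAt
  have hcomp : HasFDerivAt (fun u => φ (qd d u))
      (deriv φ (qd d u) • fderiv ℝ (qd d) u) u := hφd.comp_hasFDerivAt u hqD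
  show fderiv ℝ (fun u => φ (qd d u)) u (ed g) = _
  rw [hcomp.fderiv, ContinuousLinearMap.smul_apply, fderiv_qd_single, smul_eq_mul]

private lemma pd2_comp (φ : ℝ → ℝ) {U : Set ℝ} (hφ : AnalyticOnNhd ℝ φ U)
    (hq : ∀ u : EuclideanSpace ℝ (Fin d), qd d u ∈ U) (g : Fin d) :
    pd (ed g) (pd (ed g) (fun u => φ (qd d u))) =
      fun u => 2 * deriv φ (qd d u) + 4 * deriv (deriv φ) (qd d u) * u g ^ 2 := by
  rw [pd_comp φ hφ hq g]
  funext u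
  have hqD : HasFDerivAt (qd d) (fderiv ℝ (qd d) u) u :=
    (hasFDerivAt_qd u).differentiableAt.hasFDerivAt
  have hc : HasFDerivAt (fun u : EuclideanSpace ℝ (Fin d) => deriv φ (qd d u))
      (deriv (deriv φ) (qd d u) • fderiv ℝ (qd d) u) u :=
    (((hφ.deriv) _ (hq u)).differentiableAt).hasDerivAt.comp_hasFDerivAt u hqD
  have hproj : HasFDerivAt (fun u : EuclideanSpace ℝ (Fin d) => u g)
      (EuclideanSpace.proj g : EuclideanSpace ℝ (Fin d) →L[ℝ] ℝ) u := by
    exact (EuclideanSpace.proj (𝕜 := ℝ) g).hasFDerivAt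
  have hl : HasFDerivAt (fun u : EuclideanSpace ℝ (Fin d) => 2 * u g)
      ((2:ℝ) • (EuclideanSpace.proj g : EuclideanSpace ℝ (Fin d) →L[ℝ] ℝ)) u :=
    hproj.const_mul 2
  have hmul := hc.fun_mul hl
  show fderiv ℝ _ u (ed g) = _
  rw [hmul.fderiv]
  simp only [ContinuousLinearMap.add_apply, ContinuousLinearMap.smul_apply,
    smul_eq_mul]
  rw [fderiv_qd_single]
  have hpg : (EuclideanSpace.proj g : EuclideanSpace ℝ (Fin d) →L[ℝ] ℝ) (ed g) = 1 := by
    simp [ed, PiLp.proj_apply, EuclideanSpace.single_apply]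
  rw [hpg]
  ring

private lemma sum_pd2 (φ : ℝ → ℝ) {U : Set ℝ} (hφ : AnalyticOnNhd ℝ φ U)
    (hq : ∀ u : EuclideanSpace ℝ (Fin d), qd d u ∈ U) :
    (fun u : EuclideanSpace ℝ (Fin d) =>
        ∑ g, pd (ed g) (pd (ed g) (fun u => φ (qd d u))) u)
      = fun u => lap d φ (qd d u) := by
  funext u
  have h : ∀ g : Fin d, pd (ed g) (pd (ed g) (fun u => φ (qd d u))) u
      = 2 * deriv φ (qd d u) + 4 * deriv (deriv φ) (qd d u) * u g ^ 2 :=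
    fun g => congrFun (pd2_comp φ hφ hq g) u
  rw [Finset.sum_congr rfl fun g _ => h g]
  rw [Finset.sum_add_distrib, Finset.sum_const, Finset.card_univ, Fintype.card_fin,
    ← Finset.mul_sum]
  have hqq : ∑ g : Fin d, (u g) ^ 2 = qd d u := rfl
  rw [hqq]
  simp only [lap, nsmul_eq_mul]
  push_cast
  ring

end Comp

/-- Technical Lemma S1 of the paper. If `A : ℝ → ℝ` is even and
real-analytic on all of `ℝ`, then `u ↦ A(‖u‖)` is smooth on `ℝ^d` and the sum of iterated
fourth-order partial derivatives `Σ_{g,g'} ∂²_{g'} ∂²_g [A(‖·‖)]` is again of the form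
`A¹(‖u‖)` for an even function `A¹` that is real-analytic on all of `ℝ`. -/
theorem radial_analytic_iterated_laplacian
    (d : ℕ) (hd : 1 ≤ d) (A : ℝ → ℝ)
    (hAeven : ∀ t, A (-t) = A t) (hA : AnalyticOnNhd ℝ A Set.univ) :
    ContDiff ℝ (⊤ : ℕ∞) (fun u : EuclideanSpace ℝ (Fin d) => A ‖u‖) ∧
    ∃ A1 : ℝ → ℝ, (∀ t, A1 (-t) = A1 t) ∧ AnalyticOnNhd ℝ A1 Set.univ ∧
      ∀ u : EuclideanSpace ℝ (Fin d),
        (∑ g : Fin d, ∑ g' : Fin d,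
            iteratedFDeriv ℝ 4 (fun v : EuclideanSpace ℝ (Fin d) => A ‖v‖) u
              ![EuclideanSpace.single g' (1 : ℝ), EuclideanSpace.single g' (1 : ℝ),
                EuclideanSpace.single g (1 : ℝ), EuclideanSpace.single g (1 : ℝ)])
          = A1 ‖u‖ := by
  obtain ⟨c, B, hc, hB, hBt⟩ := exists_B A hAeven hA
  set U : Set ℝ := Set.Ioo (-c) c ∪ Set.Ioi 0 with hU
  have hs : ∀ s : ℝ, 0 ≤ s → s ∈ U := by
    intro s hs0
    rcases eq_or_lt_of_le hs0 with h | h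
    · exact Or.inl ⟨by rw [← h]; linarith, by rw [← h]; linarith⟩
    · exact Or.inr h
  have hq : ∀ u : EuclideanSpace ℝ (Fin d), qd d u ∈ U := fun u => hs _ (qd_nonneg u)
  have hF : (fun u : EuclideanSpace ℝ (Fin d) => A ‖u‖)
      = fun u => B (qd d u) := by
    funext u; rw [qd_eq_norm, hBt]
  have hFanal : AnalyticOnNhd ℝ (fun u : EuclideanSpace ℝ (Fin d) => B (qd d u)) Set.univ :=
    fun u _ => (hB _ (hq u)).comp (qd_analytic u trivial)
  constructor
  · rw [hF]; exact hFanal.contDiff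
  · refine ⟨fun t => lap d (lap d B) (t ^ 2), fun t => by simp only [neg_sq], ?_, ?_⟩
    · intro t _
      have h2 : AnalyticAt ℝ (fun t : ℝ => t ^ 2) t := analyticAt_id.pow 2
      exact AnalyticAt.comp (g := lap d (lap d B)) (f := fun t : ℝ => t ^ 2)
        ((lap_analytic (lap_analytic hB)) _ (hs _ (sq_nonneg t))) h2
    · intro u
      rw [hF]
      -- reduce iterated derivatives to pd
      have hit : ∀ g g' : Fin d,
          iteratedFDeriv ℝ 4 (fun v : EuclideanSpace ℝ (Fin d) => B (qd d v)) u
            ![EuclideanSpace.single g' (1 : ℝ), EuclideanSpace.single g' (1 : ℝ),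
              EuclideanSpace.single g (1 : ℝ), EuclideanSpace.single g (1 : ℝ)]
          = pd (ed g') (pd (ed g') (pd (ed g) (pd (ed g)
              (fun v => B (qd d v))))) u := by
        intro g g'
        exact iteratedFDeriv_four hFanal u _ _ _ _
      rw [Finset.sum_congr rfl fun g _ => Finset.sum_congr rfl fun g' _ => hit g g']
      -- set T g := pd (ed g) (pd (ed g) F)
      set F : EuclideanSpace ℝ (Fin d) → ℝ := fun v => B (qd d v) with hFdef
      have hTanal : ∀ g : Fin d, AnalyticOnNhd ℝ (pd (ed g) (pd (ed g) F)) Set.univ :=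
        fun g => pd_analytic (pd_analytic hFanal _) _
      have hswap : ∀ g' : Fin d,
          (∑ g : Fin d, pd (ed g') (pd (ed g') (pd (ed g) (pd (ed g) F))) u)
            = pd (ed g') (pd (ed g') (fun v => ∑ g : Fin d, pd (ed g) (pd (ed g) F) v)) u := by
        intro g'
        rw [pd_sum hTanal (ed g')]
        rw [pd_sum (fun g => pd_analytic (hTanal g) (ed g')) (ed g')]
      rw [Finset.sum_comm]
      rw [Finset.sum_congr rfl fun g' _ => hswap g']
      have hS : (fun v : EuclideanSpace ℝ (Fin d) => ∑ g : Fin d, pd (ed g) (pd (ed g) F) v)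
          = fun v => lap d B (qd d v) := sum_pd2 B hB hq
      rw [Finset.sum_congr rfl fun g' _ => by rw [hS]]
      have hS2 := sum_pd2 (lap d B) (lap_analytic hB) hq
      rw [congrFun hS2 u]
      rw [qd_eq_norm]
end
end
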